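/- Let Û_i be as in the p=1 case (Û(x)=x² for |x|≤1, Û(x)=2|x|−1 for |x|≥1), 𝒩_u(t) = sup{Σ t_i a_i : Σ Û_i(a_i) ≤ u}, B(u) = {t : 𝒩_u(t) ≤ u}. Then (1/2)·max(u‖t‖_∞, √u‖t‖₂) ≤ 𝒩_u(t) ≤ u‖t‖_∞ + √u‖t‖₂ for all t ∈ ℓ², and consequently (1/2)(B_∞ ∩ √u·B₂) ⊆ B(u) ⊆ 2(B_∞ ∩ √u·B₂), where B_∞ and B₂ denote the closed unit balls of ℓ^∞ and ℓ² respectively. -/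

import Mathlib

open scoped Pointwise

noncomputable section

instance : Fact ((1:ENNReal) ≤ 2) := ⟨one_le_two⟩

/-- ℓ² over ℕ. -/
abbrev ell2 : Type := lp (fun _ : ℕ => ℝ) 2

/-- `Û` in the exponential case `p = 1`. -/
def Uhat1 (x : ℝ) : ℝ := if |x| ≤ 1 then x ^ 2 else 2 * |x| - 1

/-- `𝒩_u(t) = sup { Σ_i t_i a_i : Σ_i Û(a_i) ≤ u }`. -/
def Ncal1 (u : ℝ) (t : ell2) : ℝ :=
  sSup {S : ℝ | ∃ a : ℕ → ℝ, Summable (fun i => Uhat1 (a i)) ∧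
    (∑' i, Uhat1 (a i)) ≤ u ∧ Summable (fun i => t i * a i) ∧ S = ∑' i, t i * a i}

/-- the sup norm of an element of ℓ². -/
def supNorm (t : ell2) : ℝ := ⨆ i : ℕ, |t i|

lemma Uhat1_nonneg (x : ℝ) : 0 ≤ Uhat1 x := by
  unfold Uhat1; split_ifs with h
  · positivity
  · nlinarith [abs_nonneg x]

lemma Uhat1_zero : Uhat1 0 = 0 := by simp [Uhat1]

lemma Uhat1_le_sq (x : ℝ) : Uhat1 x ≤ x ^ 2 := by
  unfold Uhat1; split_ifs with h
  · exact le_refl _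
  · nlinarith [sq_abs x, abs_nonneg x]

lemma Uhat1_le_two_abs (x : ℝ) : Uhat1 x ≤ 2 * |x| := by
  unfold Uhat1; split_ifs with h
  · nlinarith [abs_nonneg x, sq_abs x]
  · linarith

lemma abs_le_Uhat1 {x : ℝ} (h : 1 ≤ |x|) : |x| ≤ Uhat1 x := by
  unfold Uhat1; split_ifs with h'
  · nlinarith [sq_abs x]
  · linarith

lemma bdd_abs (t : ell2) : BddAbove (Set.range fun i : ℕ => |t i|) := by
  refine ⟨‖t‖, ?_⟩
  rintro x ⟨i, rfl⟩
  simpa using lp.norm_apply_le_norm (by norm_num) t i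

lemma abs_le_supNorm (t : ell2) (i : ℕ) : |t i| ≤ supNorm t :=
  le_ciSup (bdd_abs t) i

lemma supNorm_nonneg (t : ell2) : 0 ≤ supNorm t :=
  le_trans (abs_nonneg _) (abs_le_supNorm t 0)

lemma norm_sq_eq (t : ell2) : ‖t‖ ^ 2 = ∑' i, t i ^ 2 := by
  have h := lp.norm_rpow_eq_tsum (p := 2) (by norm_num) t
  have h2 : ((2:ENNReal).toReal) = (2:ℝ) := by norm_num
  rw [h2] at h
  calc ‖t‖ ^ 2 = ‖t‖ ^ (2:ℝ) := by rw [← Real.rpow_natCast]; norm_num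
  _ = ∑' i, ‖t i‖ ^ (2:ℝ) := h
  _ = ∑' i, t i ^ 2 := by
      congr 1; funext i
      rw [show ((2:ℝ)) = ((2:ℕ):ℝ) by norm_num, Real.rpow_natCast]
      simp [Real.norm_eq_abs, sq_abs]

lemma summable_sq (t : ell2) : Summable fun i => t i ^ 2 := by
  have := lp.summable_inner (𝕜 := ℝ) t t
  simpa [RCLike.inner_apply, sq] using this

lemma key_ub (u : ℝ) (t : ell2) (a : ℕ → ℝ)
    (hs : Summable fun i => Uhat1 (a i)) (hle : (∑' i, Uhat1 (a i)) ≤ u)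
    (hta : Summable fun i => t i * a i) :
    (∑' i, t i * a i) ≤ u * supNorm t + Real.sqrt u * ‖t‖ := by
  classical
  set b : ℕ → ℝ := fun i => if 1 ≤ |a i| then a i else 0 with hb_def
  set c : ℕ → ℝ := fun i => if 1 ≤ |a i| then 0 else a i with hc_def
  have hbc : ∀ i, a i = b i + c i := by
    intro i; simp only [hb_def, hc_def]; split_ifs <;> ring
  have hb_le : ∀ i, |b i| ≤ Uhat1 (a i) := by
    intro i; simp only [hb_def]; split_ifs with h
    · exact abs_le_Uhat1 h
    · simpa using Uhat1_nonneg (a i)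
  have hc_le : ∀ i, c i ^ 2 ≤ Uhat1 (a i) := by
    intro i; simp only [hc_def]; split_ifs with h
    · simpa using Uhat1_nonneg (a i)
    · unfold Uhat1; rw [if_pos (le_of_not_ge h)]
  have hb_sum : Summable fun i => |b i| :=
    Summable.of_nonneg_of_le (fun i => abs_nonneg _) hb_le hs
  have hc_sum : Summable fun i => c i ^ 2 :=
    Summable.of_nonneg_of_le (fun i => sq_nonneg _) hc_le hs
  have hSb : (∑' i, |b i|) ≤ u := le_trans (Summable.tsum_le_tsum hb_le hb_sum hs) hle
  have hSc : (∑' i, c i ^ 2) ≤ u := le_trans (Summable.tsum_le_tsum hc_le hc_sum hs) hle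
  have htb : Summable fun i => t i * b i := by
    refine Summable.of_norm_bounded (hb_sum.mul_left (supNorm t)) ?_
    intro i
    rw [Real.norm_eq_abs, abs_mul]
    exact mul_le_mul_of_nonneg_right (abs_le_supNorm t i) (abs_nonneg _)
  have htc : Summable fun i => t i * c i := by
    refine Summable.of_norm_bounded (((summable_sq t).add hc_sum).div_const 2) ?_
    intro i
    rw [Real.norm_eq_abs, abs_mul]
    nlinarith [sq_nonneg (|t i| - |c i|), sq_abs (t i), sq_abs (c i), abs_nonneg (t i), abs_nonneg (c i)]
  have hsum_eq : (∑' i, t i * a i) = (∑' i, t i * b i) + ∑' i, t i * c i := by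
    rw [← Summable.tsum_add htb htc]
    congr 1; funext i; rw [hbc i]; ring
  have h1 : (∑' i, t i * b i) ≤ u * supNorm t := by
    calc (∑' i, t i * b i) ≤ ∑' i, supNorm t * |b i| := by
          refine Summable.tsum_le_tsum (fun i => ?_) htb (hb_sum.mul_left _)
          calc t i * b i ≤ |t i * b i| := le_abs_self _
          _ = |t i| * |b i| := abs_mul _ _
          _ ≤ supNorm t * |b i| := mul_le_mul_of_nonneg_right (abs_le_supNorm t i) (abs_nonneg _)
    _ = supNorm t * ∑' i, |b i| := tsum_mul_left
    _ ≤ supNorm t * u := mul_le_mul_of_nonneg_left hSb (supNorm_nonneg t)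
    _ = u * supNorm t := mul_comm _ _
  have hu0 : (0:ℝ) ≤ u := le_trans (tsum_nonneg fun i => Uhat1_nonneg _) hle
  have hC : Memℓp c 2 := by
    apply memℓp_gen
    have h2 : ((2:ENNReal).toReal) = (2:ℝ) := by norm_num
    rw [h2]
    have : (fun i => ‖c i‖ ^ (2:ℝ)) = fun i => c i ^ 2 := by
      funext i
      rw [show ((2:ℝ)) = ((2:ℕ):ℝ) by norm_num, Real.rpow_natCast]
      simp [Real.norm_eq_abs, sq_abs]
    rw [this]; exact hc_sum
  have h2 : (∑' i, t i * c i) ≤ Real.sqrt u * ‖t‖ := by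
    set C : ell2 := ⟨c, hC⟩ with hCdef
    have hCc : ∀ i, C i = c i := fun i => rfl
    have hinner : (∑' i, t i * c i) = (inner ℝ t C : ℝ) := by
      rw [lp.inner_eq_tsum]
      simp only [RCLike.inner_apply, conj_trivial]
      exact tsum_congr fun i => mul_comm _ _
    have hnormC : ‖C‖ ≤ Real.sqrt u := by
      rw [show Real.sqrt u = Real.sqrt u from rfl]
      have : ‖C‖ ^ 2 ≤ u := by
        rw [norm_sq_eq C]
        simpa [hCc] using hSc
      nlinarith [Real.sq_sqrt hu0, Real.sqrt_nonneg u, norm_nonneg C]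
    calc (∑' i, t i * c i) = (inner ℝ t C : ℝ) := hinner
    _ ≤ ‖t‖ * ‖C‖ := real_inner_le_norm t C
    _ ≤ ‖t‖ * Real.sqrt u := mul_le_mul_of_nonneg_left hnormC (norm_nonneg t)
    _ = Real.sqrt u * ‖t‖ := mul_comm _ _
  rw [hsum_eq]
  exact add_le_add h1 h2

lemma zero_mem (u : ℝ) (hu : 0 ≤ u) (t : ell2) :
    (0:ℝ) ∈ {S : ℝ | ∃ a : ℕ → ℝ, Summable (fun i => Uhat1 (a i)) ∧
    (∑' i, Uhat1 (a i)) ≤ u ∧ Summable (fun i => t i * a i) ∧ S = ∑' i, t i * a i} := by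
  refine ⟨fun _ => 0, ?_, ?_, ?_, ?_⟩ <;> simp [Uhat1_zero, hu, summable_zero]

lemma bdd (u : ℝ) (t : ell2) :
    BddAbove {S : ℝ | ∃ a : ℕ → ℝ, Summable (fun i => Uhat1 (a i)) ∧
    (∑' i, Uhat1 (a i)) ≤ u ∧ Summable (fun i => t i * a i) ∧ S = ∑' i, t i * a i} := by
  refine ⟨u * supNorm t + Real.sqrt u * ‖t‖, ?_⟩
  rintro S ⟨a, hs, hle, hta, rfl⟩
  exact key_ub u t a hs hle hta

lemma Ncal1_ub (u : ℝ) (t : ell2) (hu : 0 ≤ u) :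
    Ncal1 u t ≤ u * supNorm t + Real.sqrt u * ‖t‖ := by
  apply csSup_le ⟨0, zero_mem u hu t⟩
  rintro S ⟨a, hs, hle, hta, rfl⟩
  exact key_ub u t a hs hle hta

lemma mem_le_Ncal1 (u : ℝ) (t : ell2) {S : ℝ}
    (h : S ∈ {S : ℝ | ∃ a : ℕ → ℝ, Summable (fun i => Uhat1 (a i)) ∧
    (∑' i, Uhat1 (a i)) ≤ u ∧ Summable (fun i => t i * a i) ∧ S = ∑' i, t i * a i}) :
    S ≤ Ncal1 u t := le_csSup (bdd u t) h

lemma lb_sup (u : ℝ) (hu : 0 < u) (t : ell2) (i : ℕ) :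
    u / 2 * |t i| ≤ Ncal1 u t := by
  classical
  set s : ℝ := if 0 ≤ t i then 1 else -1 with hs_def
  have habs_s : |s| = 1 := by simp only [hs_def]; split_ifs <;> norm_num
  have hts : t i * s = |t i| := by
    simp only [hs_def]; split_ifs with h
    · simp [abs_of_nonneg h]
    · simp [abs_of_neg (lt_of_not_ge h)]
  set a : ℕ → ℝ := fun j => if j = i then u / 2 * s else 0 with ha_def
  have hUa : (fun j => Uhat1 (a j)) = fun j => if j = i then Uhat1 (u / 2 * s) else 0 := by
    funext j; simp only [ha_def]; split_ifs <;> simp [Uhat1_zero]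
  have hta : (fun j => t j * a j) = fun j => if j = i then t i * (u / 2 * s) else 0 := by
    funext j; simp only [ha_def]; split_ifs with h <;> simp [h]
  apply mem_le_Ncal1
  refine ⟨a, ?_, ?_, ?_, ?_⟩
  · rw [hUa]; exact (hasSum_ite_eq i _).summable
  · rw [hUa, tsum_ite_eq]
    calc Uhat1 (u / 2 * s) ≤ 2 * |u / 2 * s| := Uhat1_le_two_abs _
    _ = u := by rw [abs_mul, habs_s, abs_of_pos (by linarith)]; ring
  · rw [hta]; exact (hasSum_ite_eq i _).summable
  · rw [hta, tsum_ite_eq]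
    rw [show t i * (u / 2 * s) = u / 2 * (t i * s) by ring, hts]

lemma lb_l2 (u : ℝ) (hu : 0 < u) (t : ell2) :
    Real.sqrt u * ‖t‖ ≤ Ncal1 u t := by
  rcases eq_or_ne t 0 with rfl | ht
  · simp only [norm_zero, mul_zero]
    exact mem_le_Ncal1 u 0 (zero_mem u hu.le 0)
  · have hnt : (0:ℝ) < ‖t‖ := norm_pos_iff.mpr ht
    set r : ℝ := Real.sqrt u / ‖t‖ with hr_def
    set a : ℕ → ℝ := fun i => r * t i with ha_def
    have ha2 : Summable fun i => a i ^ 2 := by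
      have := (summable_sq t).mul_left (r ^ 2)
      simpa [ha_def, mul_pow] using this
    have hU : Summable fun i => Uhat1 (a i) :=
      Summable.of_nonneg_of_le (fun i => Uhat1_nonneg _) (fun i => Uhat1_le_sq _) ha2
    have hSa2 : (∑' i, a i ^ 2) = u := by
      have : (fun i => a i ^ 2) = fun i => r ^ 2 * t i ^ 2 := by
        funext i; simp [ha_def, mul_pow]
      rw [this, tsum_mul_left, ← norm_sq_eq, hr_def]
      rw [div_pow, Real.sq_sqrt hu.le]
      field_simp
    apply mem_le_Ncal1
    refine ⟨a, hU, ?_, ?_, ?_⟩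
    · rw [← hSa2]
      exact Summable.tsum_le_tsum (fun i => Uhat1_le_sq _) hU ha2
    · have : (fun i => t i * a i) = fun i => r * t i ^ 2 := by
        funext i; simp [ha_def]; ring
      rw [this]; exact (summable_sq t).mul_left r
    · have : (fun i => t i * a i) = fun i => r * t i ^ 2 := by
        funext i; simp [ha_def]; ring
      rw [this, tsum_mul_left, ← norm_sq_eq, hr_def]
      field_simp

/-- two-sided comparison of `𝒩_u` with `max(u‖t‖_∞, √u‖t‖₂)`, and the
resulting comparison of `B(u)` with `B_∞ ∩ √u·B₂`. -/
theorem statement6 (u : ℝ) (hu : 0 < u) :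
    (∀ t : ell2,
      (1 / 2) * max (u * supNorm t) (Real.sqrt u * ‖t‖) ≤ Ncal1 u t ∧
      Ncal1 u t ≤ u * supNorm t + Real.sqrt u * ‖t‖) ∧
    ((1 / 2 : ℝ) • ({t : ell2 | ∀ i, |t i| ≤ 1} ∩
        Real.sqrt u • Metric.closedBall (0 : ell2) 1) ⊆ {t : ell2 | Ncal1 u t ≤ u}) ∧
    ({t : ell2 | Ncal1 u t ≤ u} ⊆ (2 : ℝ) • ({t : ell2 | ∀ i, |t i| ≤ 1} ∩
        Real.sqrt u • Metric.closedBall (0 : ell2) 1)) := by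
  have hsqrt : (0:ℝ) < Real.sqrt u := Real.sqrt_pos.mpr hu
  have hN0 : ∀ t : ell2, (0:ℝ) ≤ Ncal1 u t := fun t =>
    mem_le_Ncal1 u t (zero_mem u hu.le t)
  have hmain : ∀ t : ell2,
      (1 / 2) * max (u * supNorm t) (Real.sqrt u * ‖t‖) ≤ Ncal1 u t ∧
      Ncal1 u t ≤ u * supNorm t + Real.sqrt u * ‖t‖ := by
    intro t
    constructor
    · have h1 : u * supNorm t ≤ 2 * Ncal1 u t := by
        have hsup : supNorm t ≤ 2 / u * Ncal1 u t := by
          apply ciSup_le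
          intro i
          have := lb_sup u hu t i
          rw [div_mul_eq_mul_div, le_div_iff₀ hu]
          linarith
        calc u * supNorm t ≤ u * (2 / u * Ncal1 u t) :=
              mul_le_mul_of_nonneg_left hsup hu.le
        _ = 2 * Ncal1 u t := by field_simp
      have h2 : Real.sqrt u * ‖t‖ ≤ 2 * Ncal1 u t := by
        have := lb_l2 u hu t
        have := hN0 t
        linarith
      have := max_le h1 h2
      linarith
    · exact Ncal1_ub u t hu.le
  refine ⟨hmain, ?_, ?_⟩
  · rintro x ⟨s, ⟨hs1, hs2⟩, rfl⟩
    have hns : ‖s‖ ≤ Real.sqrt u := by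
      obtain ⟨w, hw, rfl⟩ := hs2
      rw [Metric.mem_closedBall, dist_zero_right] at hw
      rw [norm_smul, Real.norm_eq_abs, abs_of_pos hsqrt]
      calc Real.sqrt u * ‖w‖ ≤ Real.sqrt u * 1 :=
            mul_le_mul_of_nonneg_left hw hsqrt.le
      _ = Real.sqrt u := mul_one _
    simp only [Set.mem_setOf_eq]
    have hsup : supNorm ((1/2:ℝ) • s) ≤ 1/2 := by
      apply ciSup_le
      intro i
      have : ((1/2:ℝ) • s) i = (1/2:ℝ) * s i := rfl
      rw [this, abs_mul]
      have := hs1 i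
      rw [abs_of_pos (by norm_num : (0:ℝ) < (1/2:ℝ))]
      linarith
    have hnorm : ‖(1/2:ℝ) • s‖ ≤ Real.sqrt u / 2 := by
      rw [norm_smul, Real.norm_eq_abs, abs_of_pos (by norm_num : (0:ℝ) < (1/2:ℝ))]
      linarith
    have hub := Ncal1_ub u ((1/2:ℝ) • s) hu.le
    have hsq : Real.sqrt u * Real.sqrt u = u := Real.mul_self_sqrt hu.le
    have e1 : u * supNorm ((1/2:ℝ) • s) ≤ u / 2 :=
      by nlinarith [supNorm_nonneg ((1/2:ℝ) • s)]
    have e2 : Real.sqrt u * ‖(1/2:ℝ) • s‖ ≤ u / 2 := by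
      nlinarith [norm_nonneg ((1/2:ℝ) • s)]
    linarith
  · intro t ht
    simp only [Set.mem_setOf_eq] at ht
    have h1 : ∀ i, |t i| ≤ 2 := by
      intro i
      have := lb_sup u hu t i
      nlinarith
    have h2 : ‖t‖ ≤ 2 * Real.sqrt u := by
      have := lb_l2 u hu t
      have hsq : Real.sqrt u * Real.sqrt u = u := Real.mul_self_sqrt hu.le
      nlinarith [norm_nonneg t]
    refine ⟨(1/2:ℝ) • t, ⟨?_, ?_⟩, ?_⟩
    · intro i
      have : ((1/2:ℝ) • t) i = (1/2:ℝ) * t i := rfl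
      rw [this, abs_mul, abs_of_pos (by norm_num : (0:ℝ) < (1/2:ℝ))]
      have := h1 i
      linarith
    · refine ⟨(1/(2 * Real.sqrt u)) • t, ?_, ?_⟩
      · rw [Metric.mem_closedBall, dist_zero_right, norm_smul, Real.norm_eq_abs,
          abs_of_pos (by positivity : (0:ℝ) < 1/(2*Real.sqrt u))]
        rw [div_mul_eq_mul_div, one_mul, div_le_one (by positivity)]
        exact h2
      · show Real.sqrt u • ((1/(2 * Real.sqrt u)) • t) = (1/2:ℝ) • t
        rw [smul_smul]
        congr 1
        field_simp
    · show (2:ℝ) • ((1/2:ℝ) • t) = t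
      rw [smul_smul]
      norm_num
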